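/- (Lemma on the boundary points.) Fix an integer n ≥ 1, σ > 0, α, τ ∈ (0,1) with τ ≥ α and τ < 2Φ(−z_{α/2}/2) − α, and λ > 0 with √λ > z_{α/2}σ/√n. Then: (a) any solution c_1 > 0 of θ = √λ − z_{α/2}σ̃(θ)/√n satisfies c_1 ∈ ((z_{α/2} − z_{τ/2})σ/√n, √λ); (b) any solution c_2 > 0 of θ = √λ + z_{α/2}σ̃(θ)/√n satisfies c_2 ∈ (√λ + (1/2)z_{α/2}σ/√n, √λ + z_{α/2}σ/√n); (c) any solution c_3 > 0 of θ = √λ + z_{α/2}σ/√n − z_{α/2}σ̃(θ)/√n satisfies c_3 ∈ (√λ, √λ + (1/2)z_{α/2}σ/√n); (d) any solution c_4 > 0 of θ = √λ + z_{α/2}σ/√n + z_{α/2}σ̃(θ)/√n satisfies c_4 ∈ (√λ + (3/2)z_{α/2}σ/√n, √λ + 2z_{α/2}σ/√n). Moreover, any such solutions satisfy c_1 < c_3 < c_2 < c_4. -/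

import Mathlib

open MeasureTheory ProbabilityTheory

/-- The standard normal cumulative distribution function. -/
noncomputable def Phi (x : ℝ) : ℝ := (gaussianReal 0 1 (Set.Iic x)).toReal

/-- P_s(θ,ν) = Φ(√n(θ − ν)/σ) + Φ(√n(−θ − ν)/σ). -/
noncomputable def Ps (n : ℕ) (σ θ ν : ℝ) : ℝ :=
  Phi (Real.sqrt n * (θ - ν) / σ) + Phi (Real.sqrt n * (-θ - ν) / σ)

/-- σ̃(θ) = (1 + λ/θ²)⁻¹ σ for θ ≠ 0, with the convention σ̃(0) = 0. -/
noncomputable def sigTilde (lam σ θ : ℝ) : ℝ :=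
  if θ = 0 then 0 else (1 + lam / θ ^ 2)⁻¹ * σ

open Classical in
/-- The piecewise function CR_a(θ,ν); here `za` denotes the quantile z_{α/2}. -/
noncomputable def CRa (n : ℕ) (σ lam za θ ν : ℝ) : ℝ :=
  if θ < |ν - za * sigTilde lam σ θ / Real.sqrt n| then
    (Ps n σ θ ν - 2 * Phi (-(za * sigTilde lam σ θ / σ))) *
      (if ν < za * sigTilde lam σ θ / Real.sqrt n then 1 else 0)
  else if θ ≤ ν + za * sigTilde lam σ θ / Real.sqrt n then
    Phi (za * sigTilde lam σ θ / σ) - Phi (Real.sqrt n * (ν - θ) / σ)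
  else 1 - 2 * Phi (-(za * sigTilde lam σ θ / σ))

open Classical in
/-- The piecewise function CR_b(θ,ν); here `za` denotes the quantile z_{α/2}. -/
noncomputable def CRb (n : ℕ) (σ α za θ ν : ℝ) : ℝ :=
  if θ < |ν - za * σ / Real.sqrt n| then
    (Ps n σ θ ν - α) * (if ν < za * σ / Real.sqrt n then 1 else 0)
  else if θ ≤ ν + za * σ / Real.sqrt n then
    1 - α / 2 - Phi (Real.sqrt n * (ν - θ) / σ)
  else 1 - α

/-!
Since `σ̃(θ) = θ² / (θ² + λ) · σ`, the correction `z σ̃(θ) / √n` always lies strictly between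
`0` and `z σ / √n`, and exceeds half of that as soon as `θ > √λ`. Each boundary equation first
places its solution on one side of `√λ`, and this bound then pins it down to a half-width.
For `c₁`, a solution below `√λ / 2` would have `σ̃(c₁) ≤ σ / 4` and so lie above `3√λ / 4`;
the stated lower bound follows because (C2) forces `z_{τ/2} > z_{α/2} / 2`.
-/

lemma Phi_mono : Monotone Phi := fun _ _ hxy =>
  ENNReal.toReal_mono (measure_ne_top _ _) (measure_mono (Set.Iic_subset_Iic.mpr hxy))

lemma Phi_neg (x : ℝ) : Phi (-x) = 1 - Phi x := by
  have hsymm : (gaussianReal 0 1).map (fun y : ℝ ↦ -y) = gaussianReal 0 1 := by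
    simpa using gaussianReal_map_neg (μ := 0) (v := 1)
  have hIic : gaussianReal 0 1 (Set.Iic (-x)) = gaussianReal 0 1 (Set.Ioi x) := by
    rw [measure_congr (Ioi_ae_eq_Ici' (gaussianReal_absolutelyContinuous 0 one_ne_zero
      Real.volume_singleton)), ← Set.neg_Ici, ← Set.neg_preimage,
      ← Measure.map_apply (by fun_prop) measurableSet_Ici, hsymm]
  rw [Phi, Phi, hIic, ← Set.compl_Iic, prob_compl_eq_one_sub measurableSet_Iic,
    ENNReal.toReal_sub_of_le prob_le_one ENNReal.one_ne_top, ENNReal.toReal_one]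

lemma Phi_zero : Phi 0 = 1 / 2 := by
  linarith [neg_zero (G := ℝ) ▸ Phi_neg 0]

section sigTilde

variable {lam σ θ : ℝ}

lemma sigTilde_eq (hθ : θ ≠ 0) : sigTilde lam σ θ = θ ^ 2 / (θ ^ 2 + lam) * σ := by
  rw [sigTilde, if_neg hθ, one_add_div (pow_ne_zero 2 hθ), inv_div]

lemma sigTilde_pos (hσ : 0 < σ) (hlam : 0 ≤ lam) (hθ : θ ≠ 0) : 0 < sigTilde lam σ θ := by
  rw [sigTilde_eq hθ]; positivity

lemma sigTilde_lt (hσ : 0 < σ) (hlam : 0 < lam) (hθ : θ ≠ 0) : sigTilde lam σ θ < σ := by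
  rw [sigTilde_eq hθ]
  exact mul_lt_of_lt_one_left hσ ((div_lt_one (by positivity)).2 (by linarith))

lemma sigTilde_le_sq_div_mul (hσ : 0 ≤ σ) (hlam : 0 < lam) (hθ : θ ≠ 0) :
    sigTilde lam σ θ ≤ θ ^ 2 / lam * σ := by
  rw [sigTilde_eq hθ]
  gcongr
  linarith [sq_nonneg θ]

lemma half_lt_sigTilde (hσ : 0 < σ) (hlam : 0 ≤ lam) (hθ : Real.sqrt lam < θ) :
    σ / 2 < sigTilde lam σ θ := by
  have hθ0 : 0 < θ := (Real.sqrt_nonneg lam).trans_lt hθ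
  have hsq : lam < θ ^ 2 := by
    simpa [Real.sq_sqrt hlam] using pow_lt_pow_left₀ hθ (Real.sqrt_nonneg lam) two_ne_zero
  rw [sigTilde_eq hθ0.ne']
  have : 1 / 2 < θ ^ 2 / (θ ^ 2 + lam) := by
    rw [div_lt_div_iff₀ two_pos (by positivity)]; linarith
  nlinarith

end sigTilde

section BoundaryEquations

variable {lam σ z r c : ℝ}

lemma sigTilde_shift_mem_Ioo (hσ : 0 < σ) (hlam : 0 < lam) (hz : 0 < z) (hr : 0 < r)
    (hc : c ≠ 0) : z * sigTilde lam σ c / r ∈ Set.Ioo 0 (z * σ / r) :=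
  ⟨by have := sigTilde_pos hσ hlam.le hc; positivity, by gcongr; exact sigTilde_lt hσ hlam hc⟩

lemma half_lt_sigTilde_shift (hσ : 0 < σ) (hlam : 0 ≤ lam) (hz : 0 < z) (hr : 0 < r)
    (hc : Real.sqrt lam < c) : 1 / 2 * z * σ / r < z * sigTilde lam σ c / r := by
  have := half_lt_sigTilde hσ hlam hc
  calc 1 / 2 * z * σ / r = z * (σ / 2) / r := by ring
    _ < z * sigTilde lam σ c / r := by gcongr

lemma mem_Ioo_of_eq_sqrt_sub (hσ : 0 < σ) (hlam : 0 < lam) (hz : 0 < z) (hr : 0 < r)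
    (hzr : z * σ / r < Real.sqrt lam) (hc : 0 < c)
    (h : c = Real.sqrt lam - z * sigTilde lam σ c / r) :
    c ∈ Set.Ioo (Real.sqrt lam / 2) (Real.sqrt lam) := by
  obtain ⟨hpos, -⟩ := sigTilde_shift_mem_Ioo hσ hlam hz hr hc.ne'
  refine ⟨?_, by linarith⟩
  by_contra! hsmall
  have hsig : sigTilde lam σ c ≤ σ / 4 := by
    have hsq : c ^ 2 ≤ lam / 4 := by
      nlinarith [Real.sq_sqrt hlam.le]
    calc sigTilde lam σ c ≤ c ^ 2 / lam * σ := sigTilde_le_sq_div_mul hσ.le hlam hc.ne'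
      _ ≤ lam / 4 / lam * σ := by gcongr
      _ = σ / 4 := by field_simp
  have hshift : z * sigTilde lam σ c / r ≤ z * σ / r / 4 := by
    calc z * sigTilde lam σ c / r ≤ z * (σ / 4) / r := by gcongr
      _ = z * σ / r / 4 := by ring
  linarith

lemma mem_Ioo_of_eq_sqrt_add (hσ : 0 < σ) (hlam : 0 < lam) (hz : 0 < z) (hr : 0 < r)
    (hc : 0 < c) (h : c = Real.sqrt lam + z * sigTilde lam σ c / r) :
    c ∈ Set.Ioo (Real.sqrt lam + 1 / 2 * z * σ / r) (Real.sqrt lam + z * σ / r) := by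
  obtain ⟨hpos, hlt⟩ := sigTilde_shift_mem_Ioo hσ hlam hz hr hc.ne'
  have hhalf := half_lt_sigTilde_shift hσ hlam.le hz hr (c := c) (by linarith)
  constructor <;> linarith

lemma mem_Ioo_of_eq_sqrt_add_sub (hσ : 0 < σ) (hlam : 0 < lam) (hz : 0 < z) (hr : 0 < r)
    (hc : 0 < c) (h : c = Real.sqrt lam + z * σ / r - z * sigTilde lam σ c / r) :
    c ∈ Set.Ioo (Real.sqrt lam) (Real.sqrt lam + 1 / 2 * z * σ / r) := by
  obtain ⟨-, hlt⟩ := sigTilde_shift_mem_Ioo hσ hlam hz hr hc.ne'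
  have hgt : Real.sqrt lam < c := by linarith
  have hhalf := half_lt_sigTilde_shift hσ hlam.le hz hr hgt
  exact ⟨hgt, by linarith [show z * σ / r = 2 * (1 / 2 * z * σ / r) by ring]⟩

lemma mem_Ioo_of_eq_sqrt_add_add (hσ : 0 < σ) (hlam : 0 < lam) (hz : 0 < z) (hr : 0 < r)
    (hc : 0 < c) (h : c = Real.sqrt lam + z * σ / r + z * sigTilde lam σ c / r) :
    c ∈ Set.Ioo (Real.sqrt lam + 3 / 2 * z * σ / r) (Real.sqrt lam + 2 * z * σ / r) := by
  obtain ⟨hpos, hlt⟩ := sigTilde_shift_mem_Ioo hσ hlam hz hr hc.ne'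
  have hhalf := half_lt_sigTilde_shift hσ hlam.le hz hr (c := c)
    (by linarith [div_pos (mul_pos hz hσ) hr])
  constructor <;> linarith [show 3 / 2 * z * σ / r = z * σ / r + 1 / 2 * z * σ / r by ring,
    show 2 * z * σ / r = z * σ / r + z * σ / r by ring]

end BoundaryEquations

theorem boundary_points_general (n : ℕ) (hn : 1 ≤ n) (σ lam α τ za zt : ℝ)
    (hσ : 0 < σ) (hlam : 0 < lam)
    (hα : α ∈ Set.Ioo (0:ℝ) 1)
    (hza : Phi (-za) = α / 2) (hzt : Phi (-zt) = τ / 2)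
    (hC2 : τ < 2 * Phi (-(za / 2)) - α)
    (hlamLB : za * σ / Real.sqrt n < Real.sqrt lam) :
    (∀ c₁ : ℝ, 0 < c₁ →
      c₁ = Real.sqrt lam - za * sigTilde lam σ c₁ / Real.sqrt n →
      c₁ ∈ Set.Ioo ((za - zt) * σ / Real.sqrt n) (Real.sqrt lam)) ∧
    (∀ c₂ : ℝ, 0 < c₂ →
      c₂ = Real.sqrt lam + za * sigTilde lam σ c₂ / Real.sqrt n →
      c₂ ∈ Set.Ioo (Real.sqrt lam + (1/2) * za * σ / Real.sqrt n)
        (Real.sqrt lam + za * σ / Real.sqrt n)) ∧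
    (∀ c₃ : ℝ, 0 < c₃ →
      c₃ = Real.sqrt lam + za * σ / Real.sqrt n - za * sigTilde lam σ c₃ / Real.sqrt n →
      c₃ ∈ Set.Ioo (Real.sqrt lam) (Real.sqrt lam + (1/2) * za * σ / Real.sqrt n)) ∧
    (∀ c₄ : ℝ, 0 < c₄ →
      c₄ = Real.sqrt lam + za * σ / Real.sqrt n + za * sigTilde lam σ c₄ / Real.sqrt n →
      c₄ ∈ Set.Ioo (Real.sqrt lam + (3/2) * za * σ / Real.sqrt n)
        (Real.sqrt lam + 2 * za * σ / Real.sqrt n)) ∧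
    (∀ c₁ c₂ c₃ c₄ : ℝ, 0 < c₁ → 0 < c₂ → 0 < c₃ → 0 < c₄ →
      c₁ = Real.sqrt lam - za * sigTilde lam σ c₁ / Real.sqrt n →
      c₂ = Real.sqrt lam + za * sigTilde lam σ c₂ / Real.sqrt n →
      c₃ = Real.sqrt lam + za * σ / Real.sqrt n - za * sigTilde lam σ c₃ / Real.sqrt n →
      c₄ = Real.sqrt lam + za * σ / Real.sqrt n + za * sigTilde lam σ c₄ / Real.sqrt n →
      c₁ < c₃ ∧ c₃ < c₂ ∧ c₂ < c₄) := by
  have hr : 0 < Real.sqrt n := Real.sqrt_pos.2 (by exact_mod_cast hn)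
  have hz : 0 < za := neg_lt_zero.1 <| Phi_mono.reflect_lt <| by
    rw [hza, Phi_zero]; linarith [hα.2]
  have hzt_half : za / 2 < zt := neg_lt_neg_iff.1 <| Phi_mono.reflect_lt <| by
    rw [hzt]; linarith [hα.1]
  have h₁ := fun c hc ↦ mem_Ioo_of_eq_sqrt_sub (c := c) hσ hlam hz hr hlamLB hc
  have h₂ := fun c hc ↦ mem_Ioo_of_eq_sqrt_add (c := c) hσ hlam hz hr hc
  have h₃ := fun c hc ↦ mem_Ioo_of_eq_sqrt_add_sub (c := c) hσ hlam hz hr hc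
  have h₄ := fun c hc ↦ mem_Ioo_of_eq_sqrt_add_add (c := c) hσ hlam hz hr hc
  have hlow : (za - zt) * σ / Real.sqrt n < Real.sqrt lam / 2 :=
    calc (za - zt) * σ / Real.sqrt n < za / 2 * σ / Real.sqrt n := by gcongr; linarith
      _ = za * σ / Real.sqrt n / 2 := by ring
      _ < Real.sqrt lam / 2 := by linarith
  refine ⟨fun c hc h ↦ ⟨hlow.trans (h₁ c hc h).1, (h₁ c hc h).2⟩, h₂, h₃, h₄, ?_⟩
  intro c₁ c₂ c₃ c₄ hc₁ hc₂ hc₃ hc₄ e₁ e₂ e₃ e₄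
  obtain ⟨-, hc₁_lt⟩ := h₁ c₁ hc₁ e₁
  obtain ⟨hc₂_gt, hc₂_lt⟩ := h₂ c₂ hc₂ e₂
  obtain ⟨hc₃_gt, hc₃_lt⟩ := h₃ c₃ hc₃ e₃
  obtain ⟨hc₄_gt, -⟩ := h₄ c₄ hc₄ e₄
  have hthree_halves :
      3 / 2 * za * σ / Real.sqrt n = za * σ / Real.sqrt n + 1 / 2 * za * σ / Real.sqrt n := by
    ring
  have hhalf_pos : 0 < 1 / 2 * za * σ / Real.sqrt n := by positivity
  exact ⟨by linarith, by linarith, by linarith⟩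

/-- Lemma on the boundary points: under (C1) τ ≥ α,
(C2) τ < 2Φ(−z_{α/2}/2) − α and √λ > z_{α/2}σ/√n, the positive solutions
c₁, c₂, c₃, c₄ of the four boundary equations lie in the stated intervals and are
ordered c₁ < c₃ < c₂ < c₄. -/
theorem boundary_points (n : ℕ) (hn : 1 ≤ n) (σ lam α τ za zt : ℝ)
    (hσ : 0 < σ) (hlam : 0 < lam)
    (hα : α ∈ Set.Ioo (0:ℝ) 1) (hτ : τ ∈ Set.Ioo (0:ℝ) 1)
    (hza : Phi (-za) = α / 2) (hzt : Phi (-zt) = τ / 2)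
    (hC1 : α ≤ τ) (hC2 : τ < 2 * Phi (-(za / 2)) - α)
    (hlamLB : za * σ / Real.sqrt n < Real.sqrt lam) :
    (∀ c₁ : ℝ, 0 < c₁ →
      c₁ = Real.sqrt lam - za * sigTilde lam σ c₁ / Real.sqrt n →
      c₁ ∈ Set.Ioo ((za - zt) * σ / Real.sqrt n) (Real.sqrt lam)) ∧
    (∀ c₂ : ℝ, 0 < c₂ →
      c₂ = Real.sqrt lam + za * sigTilde lam σ c₂ / Real.sqrt n →
      c₂ ∈ Set.Ioo (Real.sqrt lam + (1/2) * za * σ / Real.sqrt n)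
        (Real.sqrt lam + za * σ / Real.sqrt n)) ∧
    (∀ c₃ : ℝ, 0 < c₃ →
      c₃ = Real.sqrt lam + za * σ / Real.sqrt n - za * sigTilde lam σ c₃ / Real.sqrt n →
      c₃ ∈ Set.Ioo (Real.sqrt lam) (Real.sqrt lam + (1/2) * za * σ / Real.sqrt n)) ∧
    (∀ c₄ : ℝ, 0 < c₄ →
      c₄ = Real.sqrt lam + za * σ / Real.sqrt n + za * sigTilde lam σ c₄ / Real.sqrt n →
      c₄ ∈ Set.Ioo (Real.sqrt lam + (3/2) * za * σ / Real.sqrt n)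
        (Real.sqrt lam + 2 * za * σ / Real.sqrt n)) ∧
    (∀ c₁ c₂ c₃ c₄ : ℝ, 0 < c₁ → 0 < c₂ → 0 < c₃ → 0 < c₄ →
      c₁ = Real.sqrt lam - za * sigTilde lam σ c₁ / Real.sqrt n →
      c₂ = Real.sqrt lam + za * sigTilde lam σ c₂ / Real.sqrt n →
      c₃ = Real.sqrt lam + za * σ / Real.sqrt n - za * sigTilde lam σ c₃ / Real.sqrt n →
      c₄ = Real.sqrt lam + za * σ / Real.sqrt n + za * sigTilde lam σ c₄ / Real.sqrt n →
      c₁ < c₃ ∧ c₃ < c₂ ∧ c₂ < c₄) :=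
  boundary_points_general n hn σ lam α τ za zt hσ hlam hα hza hzt hC2 hlamLB
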